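/- The completion of the metric space (H̃^d, d̂) is the set Ĥ^d := (ℕ^d × ℕ^d × (ℝ\{0})) ∪ Ĥ₀^d, where Ĥ₀^d := ℝ_∓^d × ℤ^d and ℝ_∓^d := (ℝ₋)^d ∪ (ℝ₊)^d, equipped with the extended distance d̂. More precisely: the extended d̂ is a distance on Ĥ^d, (Ĥ^d, d̂) is a complete metric space, H̃^d is isometrically embedded and dense in Ĥ^d. -/

import Mathlib

/-!
The map `(n, m, λ) ↦ (λ(n + m), n - m, λ)`, `(ẋ, k) ↦ (ẋ, -k, 0)` is injective on `Ĥ^d` and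
turns `d̂` into the `ℓ¹` distance on `ℝ^d × ℝ^d × ℝ`, so `d̂` is a metric and completeness
reduces to closedness of the image. Along a convergent sequence the coordinates `n - m`, and
where the limit has `λ ≠ 0` also `λ(n + m) / λ = n + m`, are integers converging in `ℝ`, hence
eventually constant; where the limit has `λ = 0` the sign condition on `ẋ` survives because
it is closed. For density, `(ẋ, k)` is approximated by `(n, m, ±δ)` with `m - n = k` and
`δ(n + m)` within `δ(|k| + 2)` of `|ẋ|`.
-/

open MeasureTheory Complex

noncomputable section

/-- The distance `d̂` on `H̃^d = ℕ^d × ℕ^d × (ℝ \ {0})`. -/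
def dtilde {d : ℕ} (n m : Fin d → ℕ) (lam : ℝ) (n' m' : Fin d → ℕ) (lam' : ℝ) : ℝ :=
  (∑ j, |lam * ((n j : ℝ) + (m j : ℝ)) - lam' * ((n' j : ℝ) + (m' j : ℝ))|)
    + (∑ j, |((n j : ℝ) - (m j : ℝ)) - ((n' j : ℝ) - (m' j : ℝ))|)
    + |lam - lam'|

/-- The distance between a point of `H̃^d` and a point `(ẋ, k)` of `Ĥ₀^d`. -/
def dmix {d : ℕ} (n m : Fin d → ℕ) (lam : ℝ) (x : Fin d → ℝ) (k : Fin d → ℤ) : ℝ :=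
  (∑ j, |lam * ((n j : ℝ) + (m j : ℝ)) - x j|)
    + (∑ j, |((m j : ℝ) - (n j : ℝ)) - (k j : ℝ)|)
    + |lam|

/-- The distance between two points of `Ĥ₀^d`. -/
def dzero {d : ℕ} (x : Fin d → ℝ) (k : Fin d → ℤ) (x' : Fin d → ℝ) (k' : Fin d → ℤ) : ℝ :=
  (∑ j, |x j - x' j|) + (∑ j, |(k j : ℝ) - (k' j : ℝ)|)

/-- Raw points: either a point of `ℕ^d × ℕ^d × ℝ` or a point of `ℝ^d × ℤ^d`. -/
def HeisPoint (d : ℕ) : Type :=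
  (((Fin d → ℕ) × (Fin d → ℕ)) × ℝ) ⊕ ((Fin d → ℝ) × (Fin d → ℤ))

/-- The predicate carving out `Ĥ^d`: `λ ≠ 0` on the first summand; all components of `ẋ`
of the same sign (`ẋ ∈ (ℝ₋)^d ∪ (ℝ₊)^d`) on the second. -/
def HhatPred {d : ℕ} : HeisPoint d → Prop
  | Sum.inl a => a.2 ≠ 0
  | Sum.inr b => (∀ j, b.1 j ≤ 0) ∨ (∀ j, 0 ≤ b.1 j)

/-- The completed frequency space `Ĥ^d`. -/
def Hhat (d : ℕ) : Type := {a : HeisPoint d // HhatPred a}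

/-- The extended distance `d̂` on `Ĥ^d`. -/
def dhat {d : ℕ} (a b : Hhat d) : ℝ :=
  match a.1, b.1 with
  | Sum.inl x, Sum.inl y => dtilde x.1.1 x.1.2 x.2 y.1.1 y.1.2 y.2
  | Sum.inl x, Sum.inr y => dmix x.1.1 x.1.2 x.2 y.1 y.2
  | Sum.inr x, Sum.inl y => dmix y.1.1 y.1.2 y.2 x.1 x.2
  | Sum.inr x, Sum.inr y => dzero x.1 x.2 y.1 y.2

/-- The canonical embedding of `H̃^d` into `Ĥ^d`. -/
def iotaT {d : ℕ} (n m : Fin d → ℕ) (lam : ℝ) (h : lam ≠ 0) : Hhat d :=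
  ⟨Sum.inl ((n, m), lam), h⟩

open Filter Topology

theorem exists_int_eventually_eq_of_tendsto {α : Type*} {l : Filter α} [l.NeBot] {w : α → ℝ}
    {L : ℝ} (hw : Tendsto w l (𝓝 L)) (hint : ∀ᶠ p in l, w p ∈ Set.range ((↑) : ℤ → ℝ)) :
    ∃ k : ℤ, L = k ∧ ∀ᶠ p in l, w p = k := by
  obtain ⟨k, rfl⟩ : L ∈ Set.range ((↑) : ℤ → ℝ) :=
    Int.isClosedEmbedding_coe_real.isClosed_range.mem_of_tendsto hw hint
  refine ⟨k, rfl, ?_⟩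
  filter_upwards [hint, Metric.tendsto_nhds.1 hw 1 one_pos] with p ⟨z, hz⟩ hp
  rw [← hz, Int.dist_cast_real] at hp
  rw [← hz]
  by_contra hne
  exact (Int.pairwise_one_le_dist fun h => hne (congrArg _ h)).not_gt hp

theorem exists_abs_eq_one_forall_eq_mul_abs {ι : Type*} {x : ι → ℝ}
    (hx : (∀ j, x j ≤ 0) ∨ ∀ j, 0 ≤ x j) : ∃ s : ℝ, |s| = 1 ∧ ∀ j, x j = s * |x j| := by
  rcases hx with hx | hx
  · exact ⟨-1, by simp, fun j => by rw [abs_of_nonpos (hx j)]; ring⟩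
  · exact ⟨1, by simp, fun j => by rw [abs_of_nonneg (hx j)]; ring⟩

/-- `ℝ^d × ℝ^d × ℝ` with the `ℓ¹` distance; the coordinates `.inl (.inl j)`, `.inl (.inr j)`
and `.inr ()` carry `ẋ_j`, the second block and `λ`. -/
abbrev Coords (d : ℕ) := PiLp 1 (fun _ : (Fin d ⊕ Fin d) ⊕ Unit => ℝ)

def HeisPoint.toCoords {d : ℕ} : HeisPoint d → Coords d
  | .inl ((n, m), lam) => WithLp.toLp 1 <|
      Sum.elim (Sum.elim (fun j => lam * (n j + m j)) (fun j => (n j : ℝ) - m j)) fun _ => lam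
  | .inr (x, k) => WithLp.toLp 1 <| Sum.elim (Sum.elim x fun j => -(k j : ℝ)) fun _ => 0

def Coords.sameSign (d : ℕ) : Set (Coords d) :=
  {v | (∀ j, v (.inl (.inl j)) ≤ 0) ∨ ∀ j, 0 ≤ v (.inl (.inl j))}

theorem Coords.isClosed_sameSign (d : ℕ) : IsClosed (Coords.sameSign d) := by
  simp only [Coords.sameSign, Set.ofPred_or, Set.ofPred_forall]
  exact (isClosed_iInter fun j => isClosed_le (PiLp.continuous_apply _ _ _) continuous_const).union
    (isClosed_iInter fun j => isClosed_le continuous_const (PiLp.continuous_apply _ _ _))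

theorem exists_nat_sub_eq_and_abs_mul_add_sub_le {t δ : ℝ} (ht : 0 ≤ t) (hδ : 0 < δ) (k : ℤ) :
    ∃ n m : ℕ, (m : ℤ) - n = k ∧ |δ * (n + m) - t| ≤ δ * (|(k : ℝ)| + 2) := by
  set c := ⌈t / (2 * δ)⌉₊
  refine ⟨(-k).toNat + c, k.toNat + c, by push_cast; linarith [Int.toNat_sub_toNat_neg k], ?_⟩
  have hsum : (((-k).toNat + c : ℕ) : ℝ) + (k.toNat + c : ℕ) = |(k : ℝ)| + 2 * c := by
    rw [← Int.cast_abs, ← Nat.cast_natAbs, ← Int.toNat_add_toNat_neg_eq_natAbs]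
    push_cast
    ring
  have hc : t ≤ 2 * δ * c := (div_le_iff₀' (by positivity)).1 (Nat.le_ceil _)
  have hc' : 2 * δ * (c - 1) < t := (lt_div_iff₀' (by positivity)).1 <| by
    linarith [Nat.ceil_lt_add_one (by positivity : 0 ≤ t / (2 * δ))]
  rw [hsum, abs_of_nonneg (by nlinarith [abs_nonneg (k : ℝ)])]
  nlinarith

namespace Hhat

variable {d : ℕ}

def toCoords (a : Hhat d) : Coords d := a.1.toCoords

theorem dhat_eq_dist (a b : Hhat d) : dhat a b = dist a.toCoords b.toCoords := by
  obtain ⟨(⟨⟨n, m⟩, lam⟩ | ⟨x, k⟩), -⟩ := a <;> obtain ⟨(⟨⟨n', m'⟩, lam'⟩ | ⟨x', k'⟩), -⟩ := b <;>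
    simp only [dhat, toCoords, HeisPoint.toCoords, PiLp.dist_eq_of_L1, Fintype.sum_sum_type,
      Sum.elim_inl, Sum.elim_inr, Real.dist_eq, dtilde, dmix, dzero,
      Finset.univ_unique, Finset.sum_singleton, sub_zero, zero_sub, abs_neg]
  · congr 2
    exact Finset.sum_congr rfl fun j _ => by rw [← abs_neg]; ring_nf
  · congr 2
    · exact Finset.sum_congr rfl fun j _ => abs_sub_comm _ _
    · exact Finset.sum_congr rfl fun j _ => by ring_nf
  · rw [abs_zero, add_zero]
    exact congrArg _ <| Finset.sum_congr rfl fun j _ => by rw [neg_sub_neg, abs_sub_comm]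

theorem toCoords_injective : Function.Injective (toCoords : Hhat d → Coords d) := by
  rintro ⟨(⟨⟨n, m⟩, lam⟩ | ⟨x, k⟩), ha⟩ ⟨(⟨⟨n', m'⟩, lam'⟩ | ⟨x', k'⟩), hb⟩ h <;>
    have hx := fun j => congrArg (· (.inl (.inl j))) h <;>
    have hy := fun j => congrArg (· (.inl (.inr j))) h <;>
    have hl := congrArg (· (.inr ())) h <;>
    simp only [toCoords, HeisPoint.toCoords, PiLp.toLp_apply, Sum.elim_inl, Sum.elim_inr]
      at hx hy hl
  · subst hl
    have hsum (j) : (n j : ℝ) + m j = n' j + m' j := mul_left_cancel₀ ha (hx j)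
    have hn : n = n' := funext fun j => by
      exact_mod_cast (by linarith [hsum j, hy j] : (n j : ℝ) = n' j)
    have hm : m = m' := funext fun j => by
      exact_mod_cast (by linarith [hsum j, hy j] : (m j : ℝ) = m' j)
    subst hn hm
    rfl
  · exact absurd hl ha
  · exact absurd hl.symm hb
  · obtain rfl : x = x' := funext hx
    obtain rfl : k = k' := funext fun j => by exact_mod_cast neg_inj.1 (hy j)
    rfl

theorem toCoords_mem_sameSign (a : Hhat d) : a.toCoords ∈ Coords.sameSign d := by
  obtain ⟨(⟨⟨n, m⟩, lam⟩ | ⟨x, k⟩), ha⟩ := a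
  · rcases le_total lam 0 with hlam | hlam
    · exact .inl fun j => mul_nonpos_of_nonpos_of_nonneg hlam (by positivity)
    · exact .inr fun j => mul_nonneg hlam (by positivity)
  · exact ha

theorem toCoords_diff_mem_range (a : Hhat d) (j : Fin d) :
    a.toCoords (.inl (.inr j)) ∈ Set.range ((↑) : ℤ → ℝ) := by
  obtain ⟨(⟨⟨n, m⟩, lam⟩ | ⟨x, k⟩), -⟩ := a
  · exact ⟨n j - m j, by push_cast; rfl⟩
  · exact ⟨-k j, by push_cast; rfl⟩

theorem toCoords_div_mem_range (a : Hhat d) (ha : a.toCoords (.inr ()) ≠ 0) (j : Fin d) :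
    a.toCoords (.inl (.inl j)) / a.toCoords (.inr ()) ∈ Set.range ((↑) : ℤ → ℝ) := by
  rcases a with ⟨(⟨⟨n, m⟩, lam⟩ | ⟨x, k⟩), _⟩
  · exact ⟨n j + m j, by push_cast; exact (mul_div_cancel_left₀ _ ha).symm⟩
  · exact absurd rfl ha

section Limits

variable {u : ℕ → Hhat d} {L : Coords d}

theorem tendsto_toCoords_apply (hu : Tendsto (fun p => (u p).toCoords) atTop (𝓝 L))
    (i : (Fin d ⊕ Fin d) ⊕ Unit) :
    Tendsto (fun p => (u p).toCoords i) atTop (𝓝 (L i)) :=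
  ((PiLp.continuous_apply 1 _ i).tendsto L).comp hu

theorem exists_toCoords_eq_of_tendsto_of_eq_zero
    (hu : Tendsto (fun p => (u p).toCoords) atTop (𝓝 L)) (h0 : L (.inr ()) = 0) :
    ∃ a : Hhat d, a.toCoords = L := by
  choose k hk _ using fun j => exists_int_eventually_eq_of_tendsto
    (tendsto_toCoords_apply hu (.inl (.inr j)))
    (.of_forall fun p => (u p).toCoords_diff_mem_range j)
  have hsign : L ∈ Coords.sameSign d :=
    (Coords.isClosed_sameSign d).mem_of_tendsto hu
      (.of_forall fun p => (u p).toCoords_mem_sameSign)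
  refine ⟨⟨.inr (fun j => L (.inl (.inl j)), fun j => -k j), hsign⟩, ?_⟩
  ext ((j | j) | ⟨⟩) <;> simp [toCoords, HeisPoint.toCoords, hk, h0]

theorem exists_toCoords_eq_of_tendsto_of_ne_zero
    (hu : Tendsto (fun p => (u p).toCoords) atTop (𝓝 L)) (h0 : L (.inr ()) ≠ 0) :
    ∃ a : Hhat d, a.toCoords = L := by
  have hlam := (tendsto_toCoords_apply hu (.inr ())).eventually_ne h0
  have hratio (j : Fin d) : ∀ᶠ p in atTop,
      (u p).toCoords (.inl (.inl j)) / (u p).toCoords (.inr ()) =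
        L (.inl (.inl j)) / L (.inr ()) := by
    obtain ⟨z, hz, hev⟩ := exists_int_eventually_eq_of_tendsto
      ((tendsto_toCoords_apply hu _).div (tendsto_toCoords_apply hu _) h0)
      (hlam.mono fun p hp => (u p).toCoords_div_mem_range hp j)
    exact hev.mono fun p hp => hp.trans hz.symm
  have hdiff (j : Fin d) :
      ∀ᶠ p in atTop, (u p).toCoords (.inl (.inr j)) = L (.inl (.inr j)) := by
    obtain ⟨z, hz, hev⟩ := exists_int_eventually_eq_of_tendsto (tendsto_toCoords_apply hu _)
      (.of_forall fun p => (u p).toCoords_diff_mem_range j)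
    exact hev.mono fun p hp => hp.trans hz.symm
  obtain ⟨P, hPlam, hPratio, hPdiff⟩ :=
    (hlam.and ((eventually_all.2 hratio).and (eventually_all.2 hdiff))).exists
  generalize u P = a at hPlam hPratio hPdiff
  rcases a with ⟨(⟨⟨n, m⟩, lam⟩ | ⟨x, k⟩), _⟩
  · refine ⟨⟨.inl ((n, m), L (.inr ())), h0⟩, ?_⟩
    simp only [toCoords, HeisPoint.toCoords, PiLp.toLp_apply, Sum.elim_inl, Sum.elim_inr]
      at hPlam hPratio hPdiff
    ext ((j | j) | ⟨⟩)
    · have hsum := hPratio j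
      rw [mul_div_cancel_left₀ _ hPlam] at hsum
      simp [toCoords, HeisPoint.toCoords, hsum, mul_div_cancel₀ _ h0]
    · exact hPdiff j
    · rfl
  · exact absurd rfl hPlam

theorem exists_toCoords_eq_of_tendsto (hu : Tendsto (fun p => (u p).toCoords) atTop (𝓝 L)) :
    ∃ a : Hhat d, a.toCoords = L := by
  rcases eq_or_ne (L (.inr ())) 0 with h0 | h0
  exacts [exists_toCoords_eq_of_tendsto_of_eq_zero hu h0,
    exists_toCoords_eq_of_tendsto_of_ne_zero hu h0]

end Limits

theorem exists_dhat_iotaT_lt (a : Hhat d) {ε : ℝ} (hε : 0 < ε) :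
    ∃ (n m : Fin d → ℕ) (lam : ℝ) (h : lam ≠ 0), dhat a (iotaT n m lam h) < ε := by
  rcases a with ⟨(⟨⟨n, m⟩, lam⟩ | ⟨x, k⟩), ha⟩
  · exact ⟨n, m, lam, ha, (dhat_eq_dist _ _).trans_lt ((dist_self _).trans_lt hε)⟩
  obtain ⟨s, hs, hxs⟩ := exists_abs_eq_one_forall_eq_mul_abs (x := x) ha
  set C : ℝ := ∑ j, (|(k j : ℝ)| + 2) + 1
  have hC : 0 < C := by positivity
  obtain ⟨δ, hδ, hδC⟩ : ∃ δ > 0, δ * C < ε := ⟨ε / (2 * C), by positivity, by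
    rw [div_mul_eq_mul_div, mul_div_mul_right _ _ hC.ne']
    exact half_lt_self hε⟩
  choose n m hnm happrox using fun j =>
    exists_nat_sub_eq_and_abs_mul_add_sub_le (abs_nonneg (x j)) hδ (k j)
  refine ⟨n, m, s * δ, mul_ne_zero (by rintro rfl; simp at hs) hδ.ne', ?_⟩
  have hsum (j : Fin d) : |s * δ * (n j + m j) - x j| = |δ * (n j + m j) - (|x j|)| := by
    conv_lhs => rw [hxs j]
    rw [show s * δ * (n j + m j) - s * |x j| = s * (δ * (n j + m j) - |x j|) by ring, abs_mul, hs,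
      one_mul]
  have hdiff (j : Fin d) : |(m j : ℝ) - n j - k j| = 0 := by
    rw [abs_eq_zero, sub_eq_zero]
    exact_mod_cast hnm j
  calc dmix n m (s * δ) x k = ∑ j, |δ * (n j + m j) - (|x j|)| + δ := by
        simp only [dmix, hsum, hdiff, Finset.sum_const_zero, add_zero, abs_mul, hs, one_mul,
          abs_of_pos hδ]
    _ ≤ ∑ j, δ * (|(k j : ℝ)| + 2) + δ := by gcongr with j; exact happrox j
    _ = δ * C := by rw [mul_add, Finset.mul_sum, mul_one]
    _ < ε := hδC

end Hhat

/-- `(Ĥ^d, d̂)` is the completion of `(H̃^d, d̂)`: the extended `d̂` is a distance on `Ĥ^d`,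
the space is complete, and `H̃^d` embeds isometrically as a dense subset. -/
theorem stmt7 (d : ℕ) :
    -- d̂ is a distance on Ĥ^d
    (∀ a b : Hhat d, dhat a b = 0 ↔ a = b) ∧
    (∀ a b : Hhat d, dhat a b = dhat b a) ∧
    (∀ a b c : Hhat d, dhat a c ≤ dhat a b + dhat b c) ∧
    -- H̃^d is isometrically embedded
    (∀ (n m : Fin d → ℕ) (lam : ℝ) (h : lam ≠ 0) (n' m' : Fin d → ℕ) (lam' : ℝ)
        (h' : lam' ≠ 0),
      dhat (iotaT n m lam h) (iotaT n' m' lam' h') = dtilde n m lam n' m' lam') ∧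
    -- (Ĥ^d, d̂) is complete
    (∀ u : ℕ → Hhat d,
      (∀ ε > (0 : ℝ), ∃ N, ∀ p ≥ N, ∀ q ≥ N, dhat (u p) (u q) < ε) →
      ∃ a : Hhat d, ∀ ε > (0 : ℝ), ∃ N, ∀ p ≥ N, dhat (u p) a < ε) ∧
    -- H̃^d is dense in Ĥ^d
    (∀ a : Hhat d, ∀ ε > (0 : ℝ),
      ∃ (n m : Fin d → ℕ) (lam : ℝ) (h : lam ≠ 0), dhat a (iotaT n m lam h) < ε) := by
  refine ⟨fun a b => ?_, fun a b => ?_, fun a b c => ?_, fun _ _ _ _ _ _ _ _ => rfl,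
    fun u hu => ?_, fun a ε hε => a.exists_dhat_iotaT_lt hε⟩ <;>
    simp only [Hhat.dhat_eq_dist] at *
  · rw [dist_eq_zero, Hhat.toCoords_injective.eq_iff]
  · exact dist_comm _ _
  · exact dist_triangle _ _ _
  · obtain ⟨L, hL⟩ := cauchySeq_tendsto_of_complete (Metric.cauchySeq_iff.2 hu)
    obtain ⟨a, rfl⟩ := Hhat.exists_toCoords_eq_of_tendsto hL
    exact ⟨a, fun ε hε => Metric.tendsto_atTop.1 hL ε hε⟩
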